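/- arXiv:2507.02323 — 4 statements merged into one kernel-verified Lean document; each statement's English description precedes it below -/
import Mathlib

section
/- For each α ∈ (0,1), the function h_α(f) = f·(−log f)^α is concave on (0,1]. -/
/-! Writing `L = -log f > 0` on `(0, 1)`, the function `f * L ^ α` has derivative
`L ^ α - α * L ^ (α - 1)` and second derivative `-α * L ^ (α - 2) * (L + 1 - α) / f`,
which is nonpositive for `0 < α ≤ 1`. -/

open Real Set

section

variable {x : ℝ}

lemma hasDerivAt_neg_log_rpow (p : ℝ) (hx0 : 0 < x) (hx1 : x ≠ 1) :
    HasDerivAt (fun f => (-log f) ^ p) (-x⁻¹ * p * (-log x) ^ (p - 1)) x :=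
  (hasDerivAt_log hx0.ne').neg.rpow_const
    (Or.inl (neg_ne_zero.2 (log_ne_zero_of_pos_of_ne_one hx0 hx1)))

lemma hasDerivAt_mul_neg_log_rpow (α : ℝ) (hx0 : 0 < x) (hx1 : x ≠ 1) :
    HasDerivAt (fun f => f * (-log f) ^ α) ((-log x) ^ α - α * (-log x) ^ (α - 1)) x := by
  refine ((hasDerivAt_id x).mul (hasDerivAt_neg_log_rpow α hx0 hx1)).congr_deriv ?_
  simp only [id]
  field_simp
  ring

lemma hasDerivAt_neg_log_rpow_sub_mul_rpow (α : ℝ) (hx0 : 0 < x) (hx1 : x ≠ 1) :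
    HasDerivAt (fun f => (-log f) ^ α - α * (-log f) ^ (α - 1))
      (-(α * (-log x) ^ (α - 2) * (-log x + 1 - α)) / x) x := by
  have hL : -log x ≠ 0 := neg_ne_zero.2 (log_ne_zero_of_pos_of_ne_one hx0 hx1)
  refine ((hasDerivAt_neg_log_rpow α hx0 hx1).sub
    ((hasDerivAt_neg_log_rpow (α - 1) hx0 hx1).const_mul α)).congr_deriv ?_
  have hpow : (-log x) ^ (α - 1) = (-log x) ^ (α - 2) * -log x := by
    rw [← rpow_add_one hL]
    ring_nf
  rw [hpow, show α - 1 - 1 = α - 2 by ring]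
  field_simp
  ring

end

lemma continuousOn_mul_neg_log_rpow {α : ℝ} (hα : 0 ≤ α) :
    ContinuousOn (fun f => f * (-log f) ^ α) {0}ᶜ :=
  continuousOn_id.mul (continuousOn_log.neg.rpow_const fun _ _ => Or.inr hα)

theorem fde_entropy_function_concave (α : ℝ) (hα : α ∈ Set.Ioo (0:ℝ) 1) :
    ConcaveOn ℝ (Set.Ioc (0:ℝ) 1) (fun f : ℝ => f * (-Real.log f) ^ α) := by
  obtain ⟨hα0, hα1⟩ := hα
  refine concaveOn_of_hasDerivWithinAt2_nonpos (convex_Ioc 0 1)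
    (f' := fun x => (-log x) ^ α - α * (-log x) ^ (α - 1))
    (f'' := fun x => -(α * (-log x) ^ (α - 2) * (-log x + 1 - α)) / x)
    ((continuousOn_mul_neg_log_rpow hα0.le).mono fun y hy => hy.1.ne') ?_ ?_ ?_
  all_goals simp only [interior_Ioc]
  · exact fun x hx => (hasDerivAt_mul_neg_log_rpow α hx.1 hx.2.ne).hasDerivWithinAt
  · exact fun x hx => (hasDerivAt_neg_log_rpow_sub_mul_rpow α hx.1 hx.2.ne).hasDerivWithinAt
  · rintro x ⟨hx0, hx1⟩
    have hL : 0 < -log x := neg_pos.2 (log_neg hx0 hx1)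
    have hpos : 0 < α * (-log x) ^ (α - 2) * (-log x + 1 - α) :=
      mul_pos (mul_pos hα0 (rpow_pos_of_pos hL _)) (by linarith)
    exact div_nonpos_of_nonpos_of_nonneg (by linarith) hx0.le
end

section
/- For the exponential distribution with rate λ ∈ (0,1], the fractional differential entropy equals (1/λ)·Γ(1+α, log(1/λ)), where Γ(s,x) is the upper incomplete gamma function. -/
/-!
Writing `c = -log λ`, the density is `λ e^{-λx} = e^{-(λx + c)}`, so the integrand is
`g (λx + c)` with `g t = e^{-t} t^α`. The substitution `y = λx` produces the factor `λ⁻¹`,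
and the shift `t = y + c` moves the domain `(0, ∞)` to `(c, ∞)`, which is `Γ(1 + α, c)`.
-/

open MeasureTheory

/-- Upper incomplete gamma function Γ(s, x) = ∫_x^∞ e^{−t} t^{s−1} dt. -/
noncomputable def upperIncGamma (s x : ℝ) : ℝ :=
  ∫ t in Set.Ioi x, Real.exp (-t) * t ^ (s - 1)

open Set Real

theorem integral_comp_add_right_Ioi {E : Type*} [NormedAddCommGroup E] [NormedSpace ℝ E]
    (g : ℝ → E) (a c : ℝ) :
    ∫ x in Ioi a, g (x + c) = ∫ x in Ioi (a + c), g x := by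
  have hpre : (· + c) ⁻¹' Ioi (a + c) = Ioi a := by
    ext x
    simp
  simpa [hpre] using (measurePreserving_add_right volume c).setIntegral_preimage_emb
    (MeasurableEquiv.addRight c).measurableEmbedding g (Ioi (a + c))

theorem mul_exp_neg_mul_eq_exp {lam : ℝ} (hlam : 0 < lam) (x : ℝ) :
    lam * exp (-lam * x) = exp (-(lam * x + -log lam)) := by
  rw [neg_add, neg_neg, exp_add, exp_log hlam, neg_mul, mul_comm]

theorem upperIncGamma_one_add (α x : ℝ) :
    upperIncGamma (1 + α) x = ∫ t in Ioi x, exp (-t) * t ^ α := by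
  simp only [upperIncGamma, add_sub_cancel_left]

theorem fde_exponential_general (α : ℝ) (lam : ℝ)
    (hlam : lam ∈ Set.Ioc (0:ℝ) 1) :
    ∫ x in Set.Ioi (0:ℝ),
        (lam * Real.exp (-lam * x)) * (-Real.log (lam * Real.exp (-lam * x))) ^ α
      = lam⁻¹ * upperIncGamma (1 + α) (-Real.log lam) := by
  set c := -log lam
  set g : ℝ → ℝ := fun t ↦ exp (-t) * t ^ α
  have hintegrand : ∀ x : ℝ,
      lam * exp (-lam * x) * (-log (lam * exp (-lam * x))) ^ α = g (lam * x + c) := by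
    intro x
    rw [mul_exp_neg_mul_eq_exp hlam.1, log_exp, neg_neg]
  simp only [hintegrand]
  rw [integral_comp_mul_left_Ioi (fun y ↦ g (y + c)) 0 hlam.1, mul_zero,
    integral_comp_add_right_Ioi, zero_add, upperIncGamma_one_add, smul_eq_mul]

theorem fde_exponential (α : ℝ) (hα : α ∈ Set.Ioc (0:ℝ) 1) (lam : ℝ)
    (hlam : lam ∈ Set.Ioc (0:ℝ) 1) :
    ∫ x in Set.Ioi (0:ℝ),
        (lam * Real.exp (-lam * x)) * (-Real.log (lam * Real.exp (-lam * x))) ^ α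
      = lam⁻¹ * upperIncGamma (1 + α) (-Real.log lam) :=
  fde_exponential_general α lam hlam
end

section
/- If X has bounded support [0,b] and density f with 0 < f ≤ 1, then H^α(f) ≤ b^{1−α}·(H_S(f))^α for 0 < α ≤ 1. -/
open MeasureTheory

/-! Under the probability measure `f dx`, Jensen's inequality for the concave map `t ↦ t ^ α`
gives `H^α(f) ≤ H_S(f) ^ α`. Since `f ≤ 1` has integral `1` over `[0, b]`, we have `b ≥ 1`, hence
`b ^ (1 - α) ≥ 1`. -/

section WeightedJensen

variable {X : Type*} [MeasurableSpace X] {ν : Measure X} {w : X → ℝ}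

theorem integral_withDensity_toNNReal_eq_integral_mul (hw : 0 ≤ᵐ[ν] w)
    (hwm : AEMeasurable w ν) (g : X → ℝ) :
    ∫ x, g x ∂ν.withDensity (fun x => (w x).toNNReal) = ∫ x, w x * g x ∂ν := by
  rw [integral_withDensity_eq_integral_smul₀ hwm.real_toNNReal]
  refine integral_congr_ae (hw.mono fun x hx => ?_)
  simp [NNReal.smul_def, Real.coe_toNNReal _ hx]

theorem integrable_withDensity_toNNReal_iff_integrable_mul (hw : 0 ≤ᵐ[ν] w)
    (hwm : AEMeasurable w ν) {g : X → ℝ} :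
    Integrable g (ν.withDensity (fun x => (w x).toNNReal)) ↔
      Integrable (fun x => w x * g x) ν := by
  rw [integrable_withDensity_iff_integrable_smul₀ hwm.real_toNNReal]
  refine integrable_congr (hw.mono fun x hx => ?_)
  simp [NNReal.smul_def, Real.coe_toNNReal _ hx]

theorem isProbabilityMeasure_withDensity_toNNReal (hw : 0 ≤ᵐ[ν] w) (hw1 : ∫ x, w x ∂ν = 1) :
    IsProbabilityMeasure (ν.withDensity (fun x => (w x).toNNReal)) := by
  have hwi : Integrable w ν := by
    by_contra h
    simp [integral_undef h] at hw1
  constructor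
  rw [withDensity_apply _ MeasurableSet.univ, Measure.restrict_univ]
  change ∫⁻ x, ENNReal.ofReal (w x) ∂ν = 1
  rw [← ofReal_integral_eq_lintegral_ofReal hwi hw, hw1, ENNReal.ofReal_one]

theorem integral_mul_rpow_le_rpow_integral_mul {g : X → ℝ} {α : ℝ} (hα0 : 0 ≤ α) (hα1 : α ≤ 1)
    (hw : 0 ≤ᵐ[ν] w) (hw1 : ∫ x, w x ∂ν = 1) (hg : 0 ≤ᵐ[ν] g)
    (hwg : Integrable (fun x => w x * g x) ν) (hwgα : Integrable (fun x => w x * g x ^ α) ν) :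
    ∫ x, w x * g x ^ α ∂ν ≤ (∫ x, w x * g x ∂ν) ^ α := by
  have hwm : AEMeasurable w ν := by
    by_contra h
    simp [integral_undef fun hi => h hi.aemeasurable] at hw1
  have := isProbabilityMeasure_withDensity_toNNReal hw hw1
  have hgμ : ∀ᵐ x ∂ν.withDensity (fun x => (w x).toNNReal), g x ∈ Set.Ici 0 :=
    (withDensity_absolutelyContinuous ν _).ae_le hg
  simpa only [integral_withDensity_toNNReal_eq_integral_mul hw hwm] using
    (Real.concaveOn_rpow hα0 hα1).le_map_integral (Real.continuous_rpow_const hα0).continuousOn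
      isClosed_Ici hgμ ((integrable_withDensity_toNNReal_iff_integrable_mul hw hwm).2 hwg)
      ((integrable_withDensity_toNNReal_iff_integrable_mul hw hwm).2 hwgα)

end WeightedJensen

theorem one_le_measureReal_of_setIntegral_eq_one {X : Type*} [MeasurableSpace X] {μ : Measure X}
    {s : Set X} {f : X → ℝ} (hs : MeasurableSet s) (hμs : μ s ≠ ⊤) (hf : ∀ x ∈ s, f x ≤ 1)
    (hf1 : ∫ x in s, f x ∂μ = 1) : 1 ≤ μ.real s := by
  have hfi : IntegrableOn f s μ := by
    by_contra h
    simp [integral_undef h] at hf1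
  calc 1 = ∫ x in s, f x ∂μ := hf1.symm
    _ ≤ ∫ _ in s, (1 : ℝ) ∂μ :=
        setIntegral_mono_on hfi (integrableOn_const hμs) hs hf
    _ = μ.real s := by simp

theorem fde_le_scaled_shannon_rpow_general (α : ℝ) (hα : α ∈ Set.Ioc (0:ℝ) 1)
    (b : ℝ)
    (f : ℝ → ℝ) (hf : ∀ x ∈ Set.Icc (0:ℝ) b, 0 < f x ∧ f x ≤ 1)
    (hdens : ∫ x in Set.Icc (0:ℝ) b, f x = 1)
    (hint1 : IntegrableOn (fun x => f x * (-Real.log (f x)) ^ α) (Set.Icc 0 b))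
    (hint2 : IntegrableOn (fun x => f x * (-Real.log (f x))) (Set.Icc 0 b)) :
    ∫ x in Set.Icc (0:ℝ) b, f x * (-Real.log (f x)) ^ α
      ≤ b ^ (1 - α) * (∫ x in Set.Icc (0:ℝ) b, f x * (-Real.log (f x))) ^ α := by
  obtain ⟨hα0, hα1⟩ := hα
  have hb1 : 1 ≤ b := by
    have := one_le_measureReal_of_setIntegral_eq_one measurableSet_Icc measure_Icc_lt_top.ne
      (fun x hx => (hf x hx).2) hdens
    rw [Real.volume_real_Icc, sub_zero] at this
    exact (le_max_iff.1 this).resolve_right zero_lt_one.not_ge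
  have hf_mem : ∀ᵐ x ∂volume.restrict (Set.Icc 0 b), x ∈ Set.Icc 0 b :=
    ae_restrict_mem measurableSet_Icc
  have hf_nonneg : 0 ≤ᵐ[volume.restrict (Set.Icc 0 b)] f :=
    hf_mem.mono fun x hx => (hf x hx).1.le
  have hlog_nonneg : 0 ≤ᵐ[volume.restrict (Set.Icc 0 b)] fun x => -Real.log (f x) :=
    hf_mem.mono fun x hx => neg_nonneg.2 (Real.log_nonpos (hf x hx).1.le (hf x hx).2)
  have hshannon : 0 ≤ ∫ x in Set.Icc 0 b, f x * (-Real.log (f x)) :=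
    integral_nonneg_of_ae <| by
      filter_upwards [hf_nonneg, hlog_nonneg] with x hfx hlogx using mul_nonneg hfx hlogx
  calc ∫ x in Set.Icc 0 b, f x * (-Real.log (f x)) ^ α
      ≤ (∫ x in Set.Icc 0 b, f x * (-Real.log (f x))) ^ α :=
        integral_mul_rpow_le_rpow_integral_mul hα0.le hα1 hf_nonneg hdens hlog_nonneg hint2 hint1
    _ ≤ b ^ (1 - α) * (∫ x in Set.Icc 0 b, f x * (-Real.log (f x))) ^ α :=
        le_mul_of_one_le_left (Real.rpow_nonneg hshannon _) (Real.one_le_rpow hb1 (by linarith))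

theorem fde_le_scaled_shannon_rpow (α : ℝ) (hα : α ∈ Set.Ioc (0:ℝ) 1)
    (b : ℝ) (hb : 0 < b)
    (f : ℝ → ℝ) (hf : ∀ x ∈ Set.Icc (0:ℝ) b, 0 < f x ∧ f x ≤ 1)
    (hdens : ∫ x in Set.Icc (0:ℝ) b, f x = 1)
    (hint1 : IntegrableOn (fun x => f x * (-Real.log (f x)) ^ α) (Set.Icc 0 b))
    (hint2 : IntegrableOn (fun x => f x * (-Real.log (f x))) (Set.Icc 0 b)) :
    ∫ x in Set.Icc (0:ℝ) b, f x * (-Real.log (f x)) ^ α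
      ≤ b ^ (1 - α) * (∫ x in Set.Icc (0:ℝ) b, f x * (-Real.log (f x))) ^ α :=
  fde_le_scaled_shannon_rpow_general α hα b f hf hdens hint1 hint2
end

section
/- For independent nonnegative absolutely continuous random variables X, Y with joint density f(x,y) = f_X(x)f_Y(y) satisfying 0 < f_X, f_Y ≤ 1, the joint fractional differential entropy is subadditive: H^α(f_{X,Y}) ≤ H^α(f_X) + H^α(f_Y) for 0 < α ≤ 1, with equality iff α = 1. -/
/-!
Write `u = -log f_X(x)` and `v = -log f_Y(y)`; both are nonnegative because the densities are at
most `1`, and `-log f(x,y) = u + v`. Since `t ↦ t ^ α` is subadditive on `[0, ∞)` for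
`0 ≤ α ≤ 1`, the joint integrand is dominated by `f_X f_Y (u ^ α + v ^ α)`, whose integral is
`H^α(f_X) + H^α(f_Y)` by Fubini and `∫ f_X = ∫ f_Y = 1`.

For `α < 1` the subadditivity is strict as soon as `u, v > 0`, so equality of the integrals forces
`f_X(x) = 1` or `f_Y(y) = 1` for almost every `(x, y)`, hence one of the densities is almost
everywhere `1` on the half-line, which is impossible for an integrable function.
-/

open MeasureTheory Real Set

lemma Real.rpow_add_lt_add_rpow {p u v : ℝ} (hu : 0 < u) (hv : 0 < v) (hp : p < 1) :
    (u + v) ^ p < u ^ p + v ^ p := by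
  have hs : 0 < u + v := by linarith
  -- `t ^ p = t * t ^ (p - 1)`, and `t ^ (p - 1)` is strictly decreasing
  have key : ∀ t, 0 < t → t < u + v → t * (u + v) ^ (p - 1) < t ^ p := fun t ht hts =>
    calc t * (u + v) ^ (p - 1) < t * t ^ (p - 1) :=
          mul_lt_mul_of_pos_left (rpow_lt_rpow_of_neg ht hts (by linarith)) ht
      _ = t ^ p := by rw [rpow_sub_one ht.ne', mul_div_cancel₀ _ ht.ne']
  calc (u + v) ^ p = u * (u + v) ^ (p - 1) + v * (u + v) ^ (p - 1) := by
        rw [← add_mul, rpow_sub_one hs.ne', mul_div_cancel₀ _ hs.ne']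
    _ < u ^ p + v ^ p := add_lt_add (key u hu (by linarith)) (key v hv (by linarith))

section Pointwise

variable {p a b : ℝ}

lemma mul_neg_log_mul_rpow_eq (ha : 0 < a) (hb : 0 < b) :
    a * b * (-log (a * b)) ^ p = a * b * (-log a + -log b) ^ p := by
  rw [log_mul ha.ne' hb.ne', neg_add]

lemma mul_neg_log_mul_rpow_le (hp0 : 0 ≤ p) (hp1 : p ≤ 1)
    (ha : 0 < a) (ha1 : a ≤ 1) (hb : 0 < b) (hb1 : b ≤ 1) :
    a * b * (-log (a * b)) ^ p ≤ a * (-log a) ^ p * b + a * (b * (-log b) ^ p) := by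
  have hu : 0 ≤ -log a := neg_nonneg.mpr (log_nonpos ha.le ha1)
  have hv : 0 ≤ -log b := neg_nonneg.mpr (log_nonpos hb.le hb1)
  calc a * b * (-log (a * b)) ^ p = a * b * (-log a + -log b) ^ p := mul_neg_log_mul_rpow_eq ha hb
    _ ≤ a * b * ((-log a) ^ p + (-log b) ^ p) :=
        mul_le_mul_of_nonneg_left (rpow_add_le_add_rpow hu hv hp0 hp1) (by positivity)
    _ = a * (-log a) ^ p * b + a * (b * (-log b) ^ p) := by ring

lemma mul_neg_log_mul_rpow_lt (hp : p < 1)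
    (ha : 0 < a) (ha1 : a < 1) (hb : 0 < b) (hb1 : b < 1) :
    a * b * (-log (a * b)) ^ p < a * (-log a) ^ p * b + a * (b * (-log b) ^ p) := by
  have hu : 0 < -log a := neg_pos.mpr (log_neg ha ha1)
  have hv : 0 < -log b := neg_pos.mpr (log_neg hb hb1)
  calc a * b * (-log (a * b)) ^ p = a * b * (-log a + -log b) ^ p := mul_neg_log_mul_rpow_eq ha hb
    _ < a * b * ((-log a) ^ p + (-log b) ^ p) :=
        mul_lt_mul_of_pos_left (rpow_add_lt_add_rpow hu hv hp) (by positivity)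
    _ = a * (-log a) ^ p * b + a * (b * (-log b) ^ p) := by ring

lemma mul_neg_log_mul_rpow_one (ha : 0 < a) (hb : 0 < b) :
    a * b * (-log (a * b)) ^ (1 : ℝ) =
      a * (-log a) ^ (1 : ℝ) * b + a * (b * (-log b) ^ (1 : ℝ)) := by
  rw [mul_neg_log_mul_rpow_eq ha hb]
  simp only [rpow_one]
  ring

end Pointwise

namespace MeasureTheory

variable {X Y : Type*} [MeasurableSpace X] [MeasurableSpace Y] {μ : Measure X} {ν : Measure Y}

lemma ae_or_of_ae_prod [SFinite ν] {P : X → Prop} {Q : Y → Prop}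
    (h : ∀ᵐ z ∂μ.prod ν, P z.1 ∨ Q z.2) : (∀ᵐ x ∂μ, P x) ∨ ∀ᵐ y ∂ν, Q y := by
  simp only [ae_iff] at h ⊢
  refine mul_eq_zero.mp ?_
  rw [← Measure.prod_prod]
  exact measure_mono_null (fun z hz => not_or.mpr hz) h

lemma ae_prod_of_ae {P : X → Prop} {Q : Y → Prop} (hP : ∀ᵐ x ∂μ, P x) (hQ : ∀ᵐ y ∂ν, Q y) :
    ∀ᵐ z ∂μ.prod ν, P z.1 ∧ Q z.2 :=
  (Measure.quasiMeasurePreserving_fst.ae hP).and (Measure.quasiMeasurePreserving_snd.ae hQ)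

lemma not_ae_eq_one_of_integrable {f : X → ℝ} (hf : Integrable f μ) (hμ : μ univ = ⊤) :
    ¬ ∀ᵐ x ∂μ, f x = 1 := fun h => by
  rcases integrable_const_iff.mp (hf.congr h) with h1 | _
  · exact one_ne_zero h1
  · exact measure_ne_top μ univ hμ

lemma integral_prod_mul_add_mul [SFinite μ] [SFinite ν] {f a : X → ℝ} {g b : Y → ℝ}
    (hf : ∫ x, f x ∂μ = 1) (hg : ∫ y, g y ∂ν = 1) (ha : Integrable a μ) (hb : Integrable b ν) :
    Integrable (fun z : X × Y => a z.1 * g z.2 + f z.1 * b z.2) (μ.prod ν) ∧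
      ∫ z, (a z.1 * g z.2 + f z.1 * b z.2) ∂μ.prod ν = ∫ x, a x ∂μ + ∫ y, b y ∂ν := by
  have hag := ha.mul_prod (integrable_of_integral_eq_one hg)
  have hfb := (integrable_of_integral_eq_one hf).mul_prod hb
  refine ⟨hag.add hfb, ?_⟩
  rw [integral_add hag hfb, integral_prod_mul, integral_prod_mul, hf, hg, mul_one, one_mul]

noncomputable def fracEntropy (p : ℝ) (μ : Measure X) (f : X → ℝ) : ℝ :=
  ∫ x, f x * (-log (f x)) ^ p ∂μ

section Independent

variable {p : ℝ} {f : X → ℝ} {g : Y → ℝ}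

lemma ae_le_fracEntropy_integrand_add (hp0 : 0 ≤ p) (hp1 : p ≤ 1)
    (hf : ∀ᵐ x ∂μ, 0 < f x ∧ f x ≤ 1) (hg : ∀ᵐ y ∂ν, 0 < g y ∧ g y ≤ 1) :
    (fun z => f z.1 * g z.2 * (-log (f z.1 * g z.2)) ^ p) ≤ᵐ[μ.prod ν]
      fun z => f z.1 * (-log (f z.1)) ^ p * g z.2 + f z.1 * (g z.2 * (-log (g z.2)) ^ p) := by
  filter_upwards [ae_prod_of_ae hf hg] with z ⟨⟨ha, ha1⟩, hb, hb1⟩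
  exact mul_neg_log_mul_rpow_le hp0 hp1 ha ha1 hb hb1

variable [SFinite μ] [SFinite ν]

theorem fracEntropy_prod_le (hp0 : 0 ≤ p) (hp1 : p ≤ 1)
    (hf : ∀ᵐ x ∂μ, 0 < f x ∧ f x ≤ 1) (hg : ∀ᵐ y ∂ν, 0 < g y ∧ g y ≤ 1)
    (hf1 : ∫ x, f x ∂μ = 1) (hg1 : ∫ y, g y ∂ν = 1)
    (hHf : Integrable (fun x => f x * (-log (f x)) ^ p) μ)
    (hHg : Integrable (fun y => g y * (-log (g y)) ^ p) ν)
    (hHfg : Integrable (fun z => f z.1 * g z.2 * (-log (f z.1 * g z.2)) ^ p) (μ.prod ν)) :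
    fracEntropy p (μ.prod ν) (fun z => f z.1 * g z.2) ≤ fracEntropy p μ f + fracEntropy p ν g := by
  obtain ⟨hR, hRint⟩ := integral_prod_mul_add_mul hf1 hg1 hHf hHg
  unfold fracEntropy
  rw [← hRint]
  exact integral_mono_ae hHfg hR (ae_le_fracEntropy_integrand_add hp0 hp1 hf hg)

theorem fracEntropy_prod_eq_add_iff (hp0 : 0 ≤ p) (hp1 : p ≤ 1)
    (hf : ∀ᵐ x ∂μ, 0 < f x ∧ f x ≤ 1) (hg : ∀ᵐ y ∂ν, 0 < g y ∧ g y ≤ 1)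
    (hf1 : ∫ x, f x ∂μ = 1) (hg1 : ∫ y, g y ∂ν = 1)
    (hf_ne : ¬ ∀ᵐ x ∂μ, f x = 1) (hg_ne : ¬ ∀ᵐ y ∂ν, g y = 1)
    (hHf : Integrable (fun x => f x * (-log (f x)) ^ p) μ)
    (hHg : Integrable (fun y => g y * (-log (g y)) ^ p) ν)
    (hHfg : Integrable (fun z => f z.1 * g z.2 * (-log (f z.1 * g z.2)) ^ p) (μ.prod ν)) :
    fracEntropy p (μ.prod ν) (fun z => f z.1 * g z.2) = fracEntropy p μ f + fracEntropy p ν g ↔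
      p = 1 := by
  obtain ⟨hR, hRint⟩ := integral_prod_mul_add_mul hf1 hg1 hHf hHg
  unfold fracEntropy
  rw [← hRint]
  constructor
  · intro heq
    by_contra hne
    have hp : p < 1 := lt_of_le_of_ne hp1 hne
    rw [integral_eq_iff_of_ae_le hHfg hR (ae_le_fracEntropy_integrand_add hp0 hp1 hf hg)] at heq
    have hone : ∀ᵐ z ∂μ.prod ν, f z.1 = 1 ∨ g z.2 = 1 := by
      filter_upwards [heq, ae_prod_of_ae hf hg] with z hz ⟨⟨ha, ha1⟩, hb, hb1⟩
      by_contra! hne1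
      exact (mul_neg_log_mul_rpow_lt hp ha (ha1.lt_of_ne hne1.1) hb (hb1.lt_of_ne hne1.2)).ne hz
    exact (ae_or_of_ae_prod hone).elim hf_ne hg_ne
  · rintro rfl
    refine integral_congr_ae ?_
    filter_upwards [ae_prod_of_ae hf hg] with z ⟨⟨ha, _⟩, hb, _⟩
    exact mul_neg_log_mul_rpow_one ha hb

end Independent

end MeasureTheory

theorem fde_subadditive_independent (α : ℝ) (hα : α ∈ Set.Ioc (0:ℝ) 1)
    (fX fY : ℝ → ℝ)
    (hfX : ∀ x ∈ Set.Ici (0:ℝ), 0 < fX x ∧ fX x ≤ 1)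
    (hfY : ∀ y ∈ Set.Ici (0:ℝ), 0 < fY y ∧ fY y ≤ 1)
    (hdX : ∫ x in Set.Ici (0:ℝ), fX x = 1)
    (hdY : ∫ y in Set.Ici (0:ℝ), fY y = 1)
    (hiX : IntegrableOn (fun x => fX x * (-Real.log (fX x)) ^ α) (Set.Ici 0))
    (hiY : IntegrableOn (fun y => fY y * (-Real.log (fY y)) ^ α) (Set.Ici 0))
    (hiXY : IntegrableOn
      (fun p : ℝ × ℝ => fX p.1 * fY p.2 * (-Real.log (fX p.1 * fY p.2)) ^ α)
      (Set.Ici 0 ×ˢ Set.Ici 0)) :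
    (∫ p in (Set.Ici (0:ℝ) ×ˢ Set.Ici (0:ℝ)),
        fX p.1 * fY p.2 * (-Real.log (fX p.1 * fY p.2)) ^ α)
      ≤ (∫ x in Set.Ici (0:ℝ), fX x * (-Real.log (fX x)) ^ α)
        + (∫ y in Set.Ici (0:ℝ), fY y * (-Real.log (fY y)) ^ α) ∧
    ((∫ p in (Set.Ici (0:ℝ) ×ˢ Set.Ici (0:ℝ)),
        fX p.1 * fY p.2 * (-Real.log (fX p.1 * fY p.2)) ^ α)
      = (∫ x in Set.Ici (0:ℝ), fX x * (-Real.log (fX x)) ^ α)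
        + (∫ y in Set.Ici (0:ℝ), fY y * (-Real.log (fY y)) ^ α) ↔ α = 1) := by
  obtain ⟨hα0, hα1⟩ := hα
  set μ : Measure ℝ := volume.restrict (Ici 0)
  have hprod : volume.restrict (Ici (0 : ℝ) ×ˢ Ici 0) = μ.prod μ := by
    rw [Measure.prod_restrict, Measure.volume_eq_prod]
  have hμ : μ univ = ⊤ := by simp [μ]
  have hfX' : ∀ᵐ x ∂μ, 0 < fX x ∧ fX x ≤ 1 := ae_restrict_of_forall_mem measurableSet_Ici hfX
  have hfY' : ∀ᵐ y ∂μ, 0 < fY y ∧ fY y ≤ 1 := ae_restrict_of_forall_mem measurableSet_Ici hfY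
  have hfX_ne := not_ae_eq_one_of_integrable (integrable_of_integral_eq_one hdX) hμ
  have hfY_ne := not_ae_eq_one_of_integrable (integrable_of_integral_eq_one hdY) hμ
  rw [IntegrableOn, hprod] at hiXY
  rw [hprod]
  exact ⟨fracEntropy_prod_le hα0.le hα1 hfX' hfY' hdX hdY hiX hiY hiXY,
    fracEntropy_prod_eq_add_iff hα0.le hα1 hfX' hfY' hdX hdY hfX_ne hfY_ne hiX hiY hiXY⟩
end
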